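/- Let A ⊂ V be a φ-stable subspace. Then the quotient map π : V/φ(K) → V/(K + φ(K)) restricted to B := image of A in V/φ(K) is non-injective if and only if the composite A → V/φ(K) → V/(K + φ(K)) is non-injective and dim(A ∩ (K + φ(K))) > dim(A ∩ φ(K)); moreover this happens if and only if dim(A ∩ U) ≥ σ₀. -/
import Mathlib


open Module Submodule Function

/-- On a perfect field the Frobenius is surjective, so images of submodules under
Frobenius-semilinear maps are again submodules. -/
instance frobSurj (k : Type*) [Field k] (p : ℕ) [Fact p.Prime] [CharP k p] [PerfectRing k p] :
    RingHomSurjective (frobenius k p) := ⟨surjective_frobenius k p⟩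


variable {k : Type*} [Field k] {p : ℕ} [Fact p.Prime] [CharP k p] [PerfectRing k p]
  {V : Type*} [AddCommGroup V] [Module k V]

/-- `φ^i(K)`, the `i`-th iterated image of `K` under the `p`-semilinear map `φ`. -/
def iterMap (φ : V →ₛₗ[frobenius k p] V) (K : Submodule k V) (i : ℕ) : Submodule k V :=
  (Submodule.map φ)^[i] K

/-- `φ^{-i}(K)`, the `i`-th iterated preimage of `K` under `φ`. -/
def iterComap (φ : V →ₛₗ[frobenius k p] V) (K : Submodule k V) (i : ℕ) : Submodule k V :=
  (Submodule.comap φ)^[i] K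

/-- The smallest `φ`-stable subspace containing `K`: `U = Σ_{i ≥ 0} φ^i(K)`. -/
def bigU (φ : V →ₛₗ[frobenius k p] V) (K : Submodule k V) : Submodule k V :=
  ⨆ i : ℕ, iterMap φ K i

/-- The flag `U_m`: `U_m = φ^{-(σ₀-m)}(K) ∩ ⋯ ∩ φ^{-1}(K) ∩ K` for `m ≤ σ₀`, and
`U_m = K + φ(K) + ⋯ + φ^{m-σ₀}(K)` for `m ≥ σ₀` (so `U_{σ₀} = K`,
`U_{σ₀+1} = K + φ(K)`). -/
def flagU (σ₀ : ℕ) (φ : V →ₛₗ[frobenius k p] V) (K : Submodule k V) (m : ℕ) : Submodule k V :=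
  if m ≤ σ₀ then ⨅ i ∈ Finset.range (σ₀ - m + 1), iterComap φ K i
  else ⨆ i ∈ Finset.range (m - σ₀ + 1), iterMap φ K i

/- ### Auxiliary lemmas -/

/-- finrank is preserved by the image under an injective Frobenius-semilinear map. -/
lemma finrank_map_phi (φ : V →ₛₗ[frobenius k p] V) (hφ : Function.Injective φ)
    (X : Submodule k V) : finrank k ↥(Submodule.map φ X) = finrank k ↥X := by
  have hj : ∀ x : X, φ x ∈ Submodule.map φ X := fun x => Submodule.mem_map_of_mem x.2
  let f : X →+ Submodule.map φ X :=
    { toFun := fun x => ⟨φ x, hj x⟩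
      map_zero' := by ext; simp
      map_add' := fun x y => by ext; simp }
  have hbij : Function.Bijective f := by
    constructor
    · intro x y hxy
      exact Subtype.ext (hφ (congrArg Subtype.val hxy))
    · rintro ⟨y, x, hx, rfl⟩
      exact ⟨⟨x, hx⟩, rfl⟩
  let j : X ≃+ Submodule.map φ X := AddEquiv.ofBijective f hbij
  have hrank : Module.rank k X = Module.rank k ↥(Submodule.map φ X) := by
    refine rank_eq_of_equiv_equiv (⟨frobenius k p, map_zero _⟩ : ZeroHom k k) j
      (bijective_frobenius k p) (fun r m => ?_)
    ext
    simp [j, f, AddEquiv.ofBijective]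
  rw [Module.finrank, Module.finrank, hrank]

lemma iterMap_zero' (φ : V →ₛₗ[frobenius k p] V) (K : Submodule k V) : iterMap φ K 0 = K := rfl

lemma iterMap_one' (φ : V →ₛₗ[frobenius k p] V) (K : Submodule k V) :
    iterMap φ K 1 = Submodule.map φ K := rfl

lemma iterMap_succ' (φ : V →ₛₗ[frobenius k p] V) (K : Submodule k V) (i : ℕ) :
    iterMap φ K (i + 1) = Submodule.map φ (iterMap φ K i) :=
  Function.iterate_succ_apply' _ _ _

lemma flagU_self' (σ₀ : ℕ) (φ : V →ₛₗ[frobenius k p] V) (K : Submodule k V) :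
    flagU σ₀ φ K σ₀ = K := by
  simp [flagU, iterComap]

lemma flagU_succ_self' (σ₀ : ℕ) (φ : V →ₛₗ[frobenius k p] V) (K : Submodule k V) :
    flagU σ₀ φ K (σ₀ + 1) = K ⊔ Submodule.map φ K := by
  have h : ¬ (σ₀ + 1 ≤ σ₀) := by omega
  have h2 : σ₀ + 1 - σ₀ + 1 = 2 := by omega
  rw [flagU, if_neg h, h2]
  rw [show Finset.range 2 = {0, 1} by rfl]
  rw [Finset.iSup_insert, Finset.iSup_singleton, iterMap_zero', iterMap_one']

lemma le_bigU' (φ : V →ₛₗ[frobenius k p] V) (K : Submodule k V) (i : ℕ) :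
    iterMap φ K i ≤ bigU φ K := le_iSup _ i

lemma map_bigU_le' (φ : V →ₛₗ[frobenius k p] V) (K : Submodule k V) :
    Submodule.map φ (bigU φ K) ≤ bigU φ K := by
  rw [bigU, Submodule.map_iSup]
  exact iSup_le fun i => by rw [← iterMap_succ']; exact le_bigU' φ K (i + 1)

lemma flagU_le_bigU' (σ₀ : ℕ) (φ : V →ₛₗ[frobenius k p] V) (K : Submodule k V) (m : ℕ)
    (hm : σ₀ < m) : flagU σ₀ φ K m ≤ bigU φ K := by
  rw [flagU, if_neg (by omega)]
  exact iSup₂_le fun i _ => le_bigU' φ K i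

lemma nonInj_map_iff' (J L : Submodule k V)
    (hle : J ≤ Submodule.comap (LinearMap.id : V →ₗ[k] V) L) (A : Submodule k V) :
    (¬ Function.Injective (fun b : ↥(Submodule.map J.mkQ A) =>
        Submodule.mapQ J L LinearMap.id hle (b : V ⧸ J))) ↔
      ∃ a, a ∈ A ∧ a ∈ L ∧ a ∉ J := by
  constructor
  · intro h
    rw [Function.not_injective_iff] at h
    obtain ⟨b₁, b₂, hfeq, hne⟩ := h
    have hmem : (↑(b₁ - b₂) : V ⧸ J) ∈ Submodule.map J.mkQ A := (b₁ - b₂).2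
    obtain ⟨a, haA, ha⟩ := hmem
    have hsub : (↑(b₁ - b₂) : V ⧸ J) = (↑b₁ : V ⧸ J) - ↑b₂ := rfl
    have hz : Submodule.mapQ J L LinearMap.id hle ((↑b₁ : V ⧸ J) - ↑b₂) = 0 := by
      rw [map_sub, sub_eq_zero]; exact hfeq
    refine ⟨a, haA, ?_, ?_⟩
    · have h0 : Submodule.mapQ J L LinearMap.id hle (J.mkQ a) = 0 := by
        rw [ha, hsub]; exact hz
      rw [Submodule.mkQ_apply, Submodule.mapQ_apply] at h0
      simpa using (Submodule.Quotient.mk_eq_zero L).mp h0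
    · intro haJ
      have h1 : J.mkQ a = 0 := by
        rw [Submodule.mkQ_apply]; exact (Submodule.Quotient.mk_eq_zero J).mpr haJ
      apply hne
      apply Subtype.ext
      have h2 : (↑b₁ : V ⧸ J) - ↑b₂ = 0 := by rw [← hsub, ← ha]; exact h1
      exact sub_eq_zero.mp h2
  · rintro ⟨a, haA, haL, haJ⟩
    intro hinj
    have hb : J.mkQ a ∈ Submodule.map J.mkQ A := Submodule.mem_map_of_mem haA
    have h1 : Submodule.mapQ J L LinearMap.id hle
          ((⟨J.mkQ a, hb⟩ : ↥(Submodule.map J.mkQ A)) : V ⧸ J)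
        = Submodule.mapQ J L LinearMap.id hle ((0 : ↥(Submodule.map J.mkQ A)) : V ⧸ J) := by
      show Submodule.mapQ J L LinearMap.id hle (J.mkQ a) = _
      rw [Submodule.mkQ_apply, Submodule.mapQ_apply]
      simp [Submodule.Quotient.mk_eq_zero, haL]
    have h2 := hinj h1
    have h3 : J.mkQ a = 0 := congrArg Subtype.val h2
    rw [Submodule.mkQ_apply, Submodule.Quotient.mk_eq_zero] at h3
    exact haJ h3

lemma nonInj_comp_iff' (L : Submodule k V) (A : Submodule k V) :
    (¬ Function.Injective (fun a : ↥A => L.mkQ (a : V))) ↔ ∃ a, a ∈ A ∧ a ∈ L ∧ a ≠ 0 := by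
  constructor
  · intro h
    rw [Function.not_injective_iff] at h
    obtain ⟨a₁, a₂, hfeq, hne⟩ := h
    refine ⟨↑a₁ - ↑a₂, sub_mem a₁.2 a₂.2, ?_, ?_⟩
    · rw [← Submodule.Quotient.mk_eq_zero L, ← Submodule.mkQ_apply, map_sub, sub_eq_zero]
      exact hfeq
    · intro h0
      exact hne (Subtype.ext (sub_eq_zero.mp h0))
  · rintro ⟨a, haA, haL, ha0⟩
    intro hinj
    have h1 : L.mkQ ((⟨a, haA⟩ : ↥A) : V) = L.mkQ ((0 : ↥A) : V) := by
      simp [Submodule.mkQ_apply, Submodule.Quotient.mk_eq_zero, haL]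
    have h2 := hinj h1
    exact ha0 (congrArg Subtype.val h2)

/-- for a φ-stable subspace `A`, the natural map
`π : V/φ(K) → V/(K + φ(K))` is non-injective on `B = image of A in V/φ(K)` iff the
composite `A → V/(K + φ(K))` is non-injective and
`dim (A ∩ (K + φ(K))) > dim (A ∩ φ(K))`, iff `dim (A ∩ U) ≥ σ₀`. -/
theorem noninjectivity_criterion [FiniteDimensional k V]
    (φ : V →ₛₗ[frobenius k p] V) (hφ : Function.Bijective φ)
    (σ₀ : ℕ) (hσ₀ : 1 ≤ σ₀) (K : Submodule k V)
    (hK : finrank k K = σ₀)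
    (hKφ : finrank k ↥(K ⊔ Submodule.map φ K) = σ₀ + 1)
    (hU : finrank k ↥(bigU φ K) = 2 * σ₀)
    (hflag : ∀ m : ℕ, m ≤ 2 * σ₀ → finrank k ↥(flagU σ₀ φ K m) = m)
    (hrec1 : ∀ m : ℕ, 0 < m → m < 2 * σ₀ →
      flagU σ₀ φ K (m + 1) = flagU σ₀ φ K m ⊔ Submodule.map φ (flagU σ₀ φ K m))
    (hrec2 : ∀ m : ℕ, 0 < m → m < 2 * σ₀ →
      Submodule.map φ (flagU σ₀ φ K (m - 1)) =
        flagU σ₀ φ K m ⊓ Submodule.map φ (flagU σ₀ φ K m))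
    (A : Submodule k V) (hA : Submodule.map φ A = A) :
    ((¬ Function.Injective (fun b : ↥(Submodule.map (Submodule.map φ K).mkQ A) =>
        Submodule.mapQ (Submodule.map φ K) (K ⊔ Submodule.map φ K) LinearMap.id
          (by simp only [Submodule.comap_id]; exact (le_sup_right : Submodule.map φ K ≤ K ⊔ Submodule.map φ K))
          (b : V ⧸ Submodule.map φ K))) ↔
      (¬ Function.Injective (fun a : ↥A => (K ⊔ Submodule.map φ K).mkQ (a : V)) ∧
        finrank k ↥(A ⊓ (K ⊔ Submodule.map φ K)) > finrank k ↥(A ⊓ Submodule.map φ K))) ∧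
    ((¬ Function.Injective (fun b : ↥(Submodule.map (Submodule.map φ K).mkQ A) =>
        Submodule.mapQ (Submodule.map φ K) (K ⊔ Submodule.map φ K) LinearMap.id
          (by simp only [Submodule.comap_id]; exact (le_sup_right : Submodule.map φ K ≤ K ⊔ Submodule.map φ K))
          (b : V ⧸ Submodule.map φ K))) ↔
      σ₀ ≤ finrank k ↥(A ⊓ bigU φ K)) := by
  classical
  have hinj : Function.Injective φ := hφ.1
  have hle' : Submodule.map φ K ≤
      Submodule.comap (LinearMap.id : V →ₗ[k] V) (K ⊔ Submodule.map φ K) := by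
    simp only [Submodule.comap_id]; exact le_sup_right
  have hPB := nonInj_map_iff' (Submodule.map φ K) (K ⊔ Submodule.map φ K) hle' A
  have hPC := nonInj_comp_iff' (K ⊔ Submodule.map φ K) A
  -- abbreviation
  set W : Submodule k V := A ⊓ bigU φ K with hWdef
  have hfmap : ∀ X : Submodule k V, finrank k ↥(Submodule.map φ X) = finrank k ↥X :=
    finrank_map_phi φ hinj
  -- W is φ-stable
  have hmapW : Submodule.map φ W = W := by
    have hle : Submodule.map φ W ≤ W := by
      rw [hWdef, Submodule.map_inf φ hinj, hA]
      exact inf_le_inf_left A (map_bigU_le' φ K)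
    exact Submodule.eq_of_le_of_finrank_le hle (hfmap W).ge
  have hWinf : ∀ X : Submodule k V,
      Submodule.map φ (W ⊓ X) = W ⊓ Submodule.map φ X := fun X => by
    rw [Submodule.map_inf φ hinj, hmapW]
  -- the dimension sequence
  set d : ℕ → ℕ := fun m => finrank k ↥(W ⊓ flagU σ₀ φ K m) with hd
  have hdφ : ∀ m : ℕ, finrank k ↥(W ⊓ Submodule.map φ (flagU σ₀ φ K m)) = d m := fun m => by
    rw [← hWinf, hfmap]
  have hflag0 : flagU σ₀ φ K 0 = ⊥ := Submodule.finrank_eq_zero.mp (hflag 0 (by omega))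
  have hchain : ∀ m : ℕ, m < 2 * σ₀ → flagU σ₀ φ K m ≤ flagU σ₀ φ K (m + 1) := by
    intro m hm
    rcases Nat.eq_zero_or_pos m with h0 | h0
    · rw [h0, hflag0]; exact bot_le
    · rw [hrec1 m h0 hm]; exact le_sup_left
  have hflag_top : flagU σ₀ φ K (2 * σ₀) = bigU φ K := by
    refine Submodule.eq_of_le_of_finrank_le (flagU_le_bigU' σ₀ φ K _ (by omega)) ?_
    rw [hU, hflag _ le_rfl]
  have hWU : W ⊓ flagU σ₀ φ K (2 * σ₀) = W := by
    rw [hflag_top]; exact inf_eq_left.mpr inf_le_right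
  have hd2σ : d (2 * σ₀) = finrank k ↥W := by
    show finrank k ↥(W ⊓ flagU σ₀ φ K (2 * σ₀)) = finrank k ↥W
    rw [hWU]
  have hd0 : d 0 = 0 := by
    show finrank k ↥(W ⊓ flagU σ₀ φ K 0) = 0
    rw [hflag0, inf_bot_eq, finrank_bot]
  have hmono : ∀ m : ℕ, m < 2 * σ₀ → d m ≤ d (m + 1) := fun m hm =>
    Submodule.finrank_mono (inf_le_inf_left W (hchain m hm))
  have hstep : ∀ m : ℕ, m < 2 * σ₀ → d (m + 1) ≤ d m + 1 := by
    intro m hm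
    have e1 := Submodule.finrank_sup_add_finrank_inf_eq
      (W ⊓ flagU σ₀ φ K (m + 1)) (flagU σ₀ φ K m)
    have e2 : (W ⊓ flagU σ₀ φ K (m + 1)) ⊓ flagU σ₀ φ K m = W ⊓ flagU σ₀ φ K m := by
      rw [inf_assoc, inf_eq_right.mpr (hchain m hm)]
    rw [e2] at e1
    have e3 : finrank k ↥((W ⊓ flagU σ₀ φ K (m + 1)) ⊔ flagU σ₀ φ K m) ≤ m + 1 := by
      calc finrank k ↥((W ⊓ flagU σ₀ φ K (m + 1)) ⊔ flagU σ₀ φ K m)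
          ≤ finrank k ↥(flagU σ₀ φ K (m + 1)) :=
            Submodule.finrank_mono (sup_le inf_le_right (hchain m hm))
        _ = m + 1 := hflag (m + 1) (by omega)
    have e4 : finrank k ↥(flagU σ₀ φ K m) = m := hflag m (by omega)
    show d (m + 1) ≤ d m + 1
    have e5 : d (m + 1) = finrank k ↥(W ⊓ flagU σ₀ φ K (m + 1)) := rfl
    have e6 : d m = finrank k ↥(W ⊓ flagU σ₀ φ K m) := rfl
    omega
  have hconc : ∀ m : ℕ, m + 1 < 2 * σ₀ → d (m + 1) + d (m + 1) ≤ d (m + 1 + 1) + d m := by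
    intro m hm
    have h1 := hrec1 (m + 1) (by omega) hm
    have h2 := hrec2 (m + 1) (by omega) hm
    have e1 := Submodule.finrank_sup_add_finrank_inf_eq
      (W ⊓ flagU σ₀ φ K (m + 1)) (W ⊓ Submodule.map φ (flagU σ₀ φ K (m + 1)))
    have einf : (W ⊓ flagU σ₀ φ K (m + 1)) ⊓ (W ⊓ Submodule.map φ (flagU σ₀ φ K (m + 1)))
        = W ⊓ Submodule.map φ (flagU σ₀ φ K m) := by
      have hth : (m + 1 : ℕ) - 1 = m := by omega
      rw [hth] at h2
      rw [inf_inf_inf_comm, inf_idem, h2]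
    have esup : (W ⊓ flagU σ₀ φ K (m + 1)) ⊔ (W ⊓ Submodule.map φ (flagU σ₀ φ K (m + 1)))
        ≤ W ⊓ flagU σ₀ φ K (m + 1 + 1) := by
      rw [h1]
      exact sup_le (inf_le_inf_left _ le_sup_left) (inf_le_inf_left _ le_sup_right)
    have e2 : finrank k ↥((W ⊓ flagU σ₀ φ K (m + 1)) ⊔
        (W ⊓ Submodule.map φ (flagU σ₀ φ K (m + 1)))) ≤ d (m + 1 + 1) :=
      Submodule.finrank_mono esup
    rw [einf] at e1
    have e3 := hdφ (m + 1)
    have e4 := hdφ m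
    have e5 : d (m + 1) = finrank k ↥(W ⊓ flagU σ₀ φ K (m + 1)) := rfl
    omega
  -- the main equivalence with the dimension of A ⊓ U
  have hKW : finrank k ↥(W ⊓ Submodule.map φ K) = d σ₀ := by
    have h1 : d σ₀ = finrank k ↥(W ⊓ flagU σ₀ φ K σ₀) := rfl
    rw [h1, flagU_self', ← hWinf, hfmap]
  have hLU : K ⊔ Submodule.map φ K ≤ bigU φ K :=
    sup_le (le_bigU' φ K 0) (le_bigU' φ K 1)
  have hP3 : (∃ a, a ∈ A ∧ a ∈ K ⊔ Submodule.map φ K ∧ a ∉ Submodule.map φ K) ↔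
      σ₀ ≤ finrank k ↥W := by
    constructor
    · rintro ⟨a, haA, haL, haJ⟩
      have haW : a ∈ W := Submodule.mem_inf.mpr ⟨haA, hLU haL⟩
      have hbase : d σ₀ + 1 ≤ d (σ₀ + 1) := by
        have hlt : W ⊓ Submodule.map φ K < W ⊓ flagU σ₀ φ K (σ₀ + 1) := by
          rw [flagU_succ_self']
          refine SetLike.lt_iff_le_and_exists.mpr
            ⟨inf_le_inf_left _ le_sup_right, a, Submodule.mem_inf.mpr ⟨haW, haL⟩, ?_⟩
          intro hmem
          exact haJ (Submodule.mem_inf.mp hmem).2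
        have := Submodule.finrank_lt_finrank_of_lt hlt
        have e5 : d (σ₀ + 1) = finrank k ↥(W ⊓ flagU σ₀ φ K (σ₀ + 1)) := rfl
        omega
      have claim1 : ∀ t : ℕ, σ₀ + t + 1 ≤ 2 * σ₀ → d (σ₀ + t) + 1 ≤ d (σ₀ + t + 1) := by
        intro t
        induction t with
        | zero => intro _; exact hbase
        | succ t ih =>
          intro hle
          have h3 := hconc (σ₀ + t) (by omega)
          have h4 := ih (by omega)
          simp only [← Nat.add_assoc]
          omega
      have claim2 : ∀ t : ℕ, σ₀ + t ≤ 2 * σ₀ → d σ₀ + t ≤ d (σ₀ + t) := by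
        intro t
        induction t with
        | zero => intro _; show d σ₀ + 0 ≤ d σ₀; omega
        | succ t ih =>
          intro hle
          have h3 := claim1 t (by omega)
          have h4 := ih (by omega)
          simp only [← Nat.add_assoc]
          omega
      have h5 := claim2 σ₀ (by omega)
      have h6 : σ₀ + σ₀ = 2 * σ₀ := by omega
      rw [h6] at h5
      omega
    · intro hge
      by_contra hnP
      have hALJ : ∀ a, a ∈ A → a ∈ K ⊔ Submodule.map φ K → a ∈ Submodule.map φ K := by
        intro a h1 h2
        by_contra h3
        exact hnP ⟨a, h1, h2, h3⟩
      have heq1 : W ⊓ flagU σ₀ φ K (σ₀ + 1) = W ⊓ Submodule.map φ K := by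
        rw [flagU_succ_self']
        refine le_antisymm ?_ (inf_le_inf_left _ le_sup_right)
        intro x hx
        obtain ⟨hxW, hxL⟩ := Submodule.mem_inf.mp hx
        have hxA : x ∈ A := (Submodule.mem_inf.mp (hWdef ▸ hxW)).1
        exact Submodule.mem_inf.mpr ⟨hxW, hALJ x hxA hxL⟩
      have hdeq : d (σ₀ + 1) = d σ₀ := by
        have h1 : d (σ₀ + 1) = finrank k ↥(W ⊓ flagU σ₀ φ K (σ₀ + 1)) := rfl
        rw [h1, heq1, hKW]
      have hdown : ∀ m : ℕ, m + 1 < 2 * σ₀ → d (m + 1 + 1) = d (m + 1) →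
          d (m + 1) = d m := by
        intro m hm hde
        have h1 := hconc m hm
        have h2 := hmono m (by omega)
        omega
      have claim3 : ∀ t : ℕ, t ≤ σ₀ → d (σ₀ - t + 1) = d (σ₀ - t) := by
        intro t
        induction t with
        | zero => intro _; exact hdeq
        | succ t ih =>
          intro h
          have hm : σ₀ - t = (σ₀ - (t + 1)) + 1 := by omega
          have ih' := ih (by omega)
          rw [hm] at ih'
          exact hdown (σ₀ - (t + 1)) (by omega) ih'
      have claim4 : ∀ t : ℕ, t ≤ σ₀ → d σ₀ = d (σ₀ - t) := by
        intro t
        induction t with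
        | zero => intro _; rfl
        | succ t ih =>
          intro h
          have ih' := ih (by omega)
          have c3 := claim3 (t + 1) h
          have hm : σ₀ - t = (σ₀ - (t + 1)) + 1 := by omega
          rw [hm] at ih'
          exact ih'.trans c3
      have hdσ0 : d σ₀ = 0 := by
        have h1 := claim4 σ₀ le_rfl
        rw [Nat.sub_self] at h1
        omega
      have claim5 : ∀ t : ℕ, σ₀ + 1 + t ≤ 2 * σ₀ → d (σ₀ + 1 + t) ≤ t := by
        intro t
        induction t with
        | zero => intro _; show d (σ₀ + 1) ≤ 0; omega
        | succ t ih =>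
          intro hle
          have h3 := hstep (σ₀ + 1 + t) (by omega)
          have h4 := ih (by omega)
          simp only [← Nat.add_assoc]
          omega
      have h5 := claim5 (σ₀ - 1) (by omega)
      have h6 : σ₀ + 1 + (σ₀ - 1) = 2 * σ₀ := by omega
      rw [h6] at h5
      omega
  have hP2 : (∃ a, a ∈ A ∧ a ∈ K ⊔ Submodule.map φ K ∧ a ∉ Submodule.map φ K) ↔
      ((¬ Function.Injective (fun a : ↥A => (K ⊔ Submodule.map φ K).mkQ (a : V))) ∧
        finrank k ↥(A ⊓ (K ⊔ Submodule.map φ K)) > finrank k ↥(A ⊓ Submodule.map φ K)) := by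
    constructor
    · rintro ⟨a, haA, haL, haJ⟩
      constructor
      · exact hPC.mpr ⟨a, haA, haL, fun h0 => haJ (h0 ▸ zero_mem _)⟩
      · refine Submodule.finrank_lt_finrank_of_lt ?_
        refine SetLike.lt_iff_le_and_exists.mpr
          ⟨inf_le_inf_left _ le_sup_right, a, Submodule.mem_inf.mpr ⟨haA, haL⟩, ?_⟩
        intro hmem
        exact haJ (Submodule.mem_inf.mp hmem).2
    · rintro ⟨-, hgt⟩
      by_contra hnP
      have hALJ : ∀ a, a ∈ A → a ∈ K ⊔ Submodule.map φ K → a ∈ Submodule.map φ K := by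
        intro a h1 h2
        by_contra h3
        exact hnP ⟨a, h1, h2, h3⟩
      have hle : A ⊓ (K ⊔ Submodule.map φ K) ≤ A ⊓ Submodule.map φ K := by
        intro x hx
        obtain ⟨h1, h2⟩ := Submodule.mem_inf.mp hx
        exact Submodule.mem_inf.mpr ⟨h1, hALJ x h1 h2⟩
      have := Submodule.finrank_mono hle
      omega
  exact ⟨hPB.trans hP2, hPB.trans hP3⟩
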